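/- arXiv:hep-th/0011237 — 4 statements merged into one kernel-verified Lean document; each statement's English description precedes it below -/
import Mathlib

section
/- Let L be a linear subspace of ℝ⁵ (with Minkowski form q(x₀,𝐱) = x₀² − ‖𝐱‖²) such that every x ∈ L ∩ dS satisfies |x₀| < sin(απ/2)·‖𝐱‖, where dS = {x : q(x) = −1}. Then the preimage of L under Φ̃(x₀,𝐱) = (sin(απ/2)x₀, 𝐱) is a spacelike subspace, i.e., every nonzero vector of Φ̃⁻¹(L) is spacelike. -/
open Real

/-- The Minkowski quadratic form on `ℝ⁵ = ℝ × ℝ⁴`. -/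
noncomputable def minkQ (x : ℝ × EuclideanSpace ℝ (Fin 4)) : ℝ := x.1 ^ 2 - ‖x.2‖ ^ 2

/-- The map `Φ̃ (x₀, 𝐱) = (sin (α * π / 2) * x₀, 𝐱)`. -/
noncomputable def PhiTilde (α : ℝ) (x : ℝ × EuclideanSpace ℝ (Fin 4)) :
    ℝ × EuclideanSpace ℝ (Fin 4) := (Real.sin (α * π / 2) * x.1, x.2)

/-! The bound `|x₀| < sin (απ/2) ‖𝐱‖` is homogeneous, so it holds for every `x ∈ L` with
`q x < 0`: rescale `x` onto `dS`. Since `Φ̃` is injective and `L` is spacelike, this applies to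
`x = Φ̃ y`, where it reads `sin (απ/2) |y₀| < sin (απ/2) ‖𝐲‖`, and cancelling the positive factor
`sin (απ/2)` gives `|y₀| < ‖𝐲‖`, i.e. `q y < 0`. -/

lemma sin_mul_pi_div_two_pos {α : ℝ} (hα0 : 0 < α) (hα2 : α < 2) : 0 < sin (α * π / 2) :=
  sin_pos_of_pos_of_lt_pi (by positivity) (by nlinarith [pi_pos])

lemma minkQ_smul (c : ℝ) (x : ℝ × EuclideanSpace ℝ (Fin 4)) :
    minkQ (c • x) = c ^ 2 * minkQ x := by
  simp only [minkQ, Prod.smul_fst, Prod.smul_snd, smul_eq_mul, norm_smul, norm_eq_abs]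
  rw [mul_pow, mul_pow, sq_abs]
  ring

lemma minkQ_neg_iff (x : ℝ × EuclideanSpace ℝ (Fin 4)) : minkQ x < 0 ↔ |x.1| < ‖x.2‖ := by
  rw [minkQ, sub_neg, sq_lt_sq, abs_norm]

lemma PhiTilde_ne_zero {α : ℝ} (hs : sin (α * π / 2) ≠ 0) {y : ℝ × EuclideanSpace ℝ (Fin 4)}
    (hy : y ≠ 0) : PhiTilde α y ≠ 0 := by
  contrapose! hy
  have h1 : sin (α * π / 2) * y.1 = 0 := congrArg Prod.fst hy
  have h2 : y.2 = 0 := congrArg Prod.snd hy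
  exact Prod.ext ((mul_eq_zero.mp h1).resolve_left hs) h2

lemma abs_fst_lt_of_minkQ_neg {k : ℝ} (L : Submodule ℝ (ℝ × EuclideanSpace ℝ (Fin 4)))
    (hLdS : ∀ x ∈ L, minkQ x = -1 → |x.1| < k * ‖x.2‖)
    {x : ℝ × EuclideanSpace ℝ (Fin 4)} (hxL : x ∈ L) (hx : minkQ x < 0) :
    |x.1| < k * ‖x.2‖ := by
  set c := (√(-minkQ x))⁻¹
  have hc : 0 < c := by simpa [c] using hx
  have hcx : minkQ (c • x) = -1 := by
    rw [minkQ_smul, inv_pow, sq_sqrt (by linarith)]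
    field_simp
    rw [div_self hx.ne]
  have h := hLdS _ (L.smul_mem c hxL) hcx
  simp only [Prod.smul_fst, Prod.smul_snd, smul_eq_mul, norm_smul, abs_mul, norm_eq_abs,
    abs_of_pos hc] at h
  nlinarith

/-- Let `L` be a spacelike linear subspace of `ℝ⁵` such that every
`x ∈ L ∩ dS` (i.e. `x ∈ L` with `q x = -1`) satisfies `|x₀| < sin (α*π/2) * ‖𝐱‖`.
Then every nonzero vector in the preimage of `L` under `Φ̃` is spacelike. -/
theorem preimage_spacelike (α : ℝ) (hα0 : 0 < α) (hα1 : α ≤ 1)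
    (L : Submodule ℝ (ℝ × EuclideanSpace ℝ (Fin 4)))
    (hLspace : ∀ x ∈ L, x ≠ 0 → minkQ x < 0)
    (hLdS : ∀ x ∈ L, minkQ x = -1 → |x.1| < Real.sin (α * π / 2) * ‖x.2‖)
    (y : ℝ × EuclideanSpace ℝ (Fin 4)) (hy : PhiTilde α y ∈ L) (hy0 : y ≠ 0) :
    minkQ y < 0 := by
  have hs : 0 < sin (α * π / 2) := sin_mul_pi_div_two_pos hα0 (by linarith)
  have hneg : minkQ (PhiTilde α y) < 0 := hLspace _ hy (PhiTilde_ne_zero hs.ne' hy0)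
  have h := abs_fst_lt_of_minkQ_neg L hLdS hy hneg
  rw [PhiTilde, abs_mul, abs_of_pos hs] at h
  exact (minkQ_neg_iff y).mpr (lt_of_mul_lt_mul_left h hs.le)
end

section
/- Let W₁ = ρ₁₂(ω₁)λ₂(τ)W⁽¹⁾ and W₂ = ρ₁₂(ω₂)λ₂(τ)W⁽¹⁾ be wedges in de Sitter space, where τ ∈ (−π/2, π/2). If ω₋ = (ω₁ − ω₂)/2 satisfies cos(ω₋)·cos(τ + ω₋) ≤ 0, then W₁ ∩ W₂ = ∅. -/
open Real

/-- De Sitter space in `ℝ⁵`. -/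
def dS : Set (Fin 5 → ℝ) :=
  {x | x 0 ^ 2 - (x 1 ^ 2 + x 2 ^ 2 + x 3 ^ 2 + x 4 ^ 2) = -1}

/-- The wedge `ρ₁₂(ω) λ₂(τ) W⁽¹⁾` in de Sitter space, described by the unit vectors
`𝐞^± = (cos (τ ∓ ω), ±sin (τ ∓ ω), 0, 0)`:
`W = {x ∈ dS : -𝐱·𝐞⁻ < x₀ < 𝐱·𝐞⁺}`. -/
noncomputable def wedgeRot (ω τ : ℝ) : Set (Fin 5 → ℝ) :=
  {x ∈ dS |
    -(x 1 * Real.cos (τ + ω) + x 2 * (-Real.sin (τ + ω))) < x 0 ∧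
    x 0 < x 1 * Real.cos (τ - ω) + x 2 * Real.sin (τ - ω)}

/-- If `ω₋ = (ω₁ - ω₂)/2` satisfies `cos ω₋ · cos (τ + ω₋) ≤ 0`, then the wedges
`W₁ = ρ₁₂(ω₁) λ₂(τ) W⁽¹⁾` and `W₂ = ρ₁₂(ω₂) λ₂(τ) W⁽¹⁾` are disjoint. -/
theorem wedges_disjoint (ω₁ ω₂ τ : ℝ) (hτ : τ ∈ Set.Ioo (-(π / 2)) (π / 2))
    (hcond : Real.cos ((ω₁ - ω₂) / 2) * Real.cos (τ + (ω₁ - ω₂) / 2) ≤ 0) :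
    wedgeRot ω₁ τ ∩ wedgeRot ω₂ τ = ∅ := by
  rw [Set.eq_empty_iff_forall_notMem]
  rintro x ⟨⟨-, h1l, h1r⟩, ⟨-, h2l, h2r⟩⟩
  set p := (ω₁ + ω₂) / 2 with hp
  set m := (ω₁ - ω₂) / 2 with hm
  have hω1 : ω₁ = p + m := by rw [hp, hm]; ring
  have hω2 : ω₂ = p - m := by rw [hp, hm]; ring
  have hct : 0 < Real.cos τ := Real.cos_pos_of_mem_Ioo hτ
  rw [hω1] at h1l h1r
  rw [hω2] at h2l h2r
  have e1 : τ + (p + m) = ((τ + m) + p) := by ring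
  have e2 : τ - (p + m) = ((τ - m) - p) := by ring
  have e3 : τ + (p - m) = ((τ - m) + p) := by ring
  have e4 : τ - (p - m) = ((τ + m) - p) := by ring
  rw [e1] at h1l; rw [e2] at h1r; rw [e3] at h2l; rw [e4] at h2r
  simp only [Real.cos_add, Real.cos_sub, Real.sin_add, Real.sin_sub] at h1l h1r h2l h2r hcond
  set u := x 1 * Real.cos p - x 2 * Real.sin p with hu
  have h3 : 0 < (Real.cos τ * Real.cos m + Real.sin τ * Real.sin m) * u := by
    rw [hu]; nlinarith [h1r, h2l]
  have h4 : 0 < (Real.cos τ * Real.cos m - Real.sin τ * Real.sin m) * u := by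
    rw [hu]; nlinarith [h2r, h1l]
  have h5 : 0 < Real.cos m * u := by nlinarith [h3, h4, hct]
  nlinarith [mul_pos h5 h4, hcond, sq_nonneg u, mul_nonneg (sq_nonneg u) (neg_nonneg.mpr hcond)]
end

section
/- Suppose 0 < α < 1. Then there exist ω ∈ (0, π/2) and τ > 0 with τ ∈ (−π/2, π/2) satisfying both f(τ) + ω < π/2 and τ + ω > π/2, where f(τ) = arcsin(sin(απ/2)sin(τ)); moreover for such ω, τ one has cos(ω) < sin(τ), so that τ₀ := arcsin(−cos(ω)/sin(τ)) is well defined. -/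
open Real

/-- For `0 < α < 1` there exist `ω ∈ (0, π/2)` and `τ ∈ (0, π/2)` with
`f τ + ω < π/2` and `τ + ω > π/2`, where `f τ = arcsin (sin (α*π/2) sin τ)`;
moreover, for any such `ω, τ` one has `cos ω < sin τ`, so that
`τ₀ = arcsin (-cos ω / sin τ)` is well defined. -/
theorem exists_omega_tau (α : ℝ) (hα0 : 0 < α) (hα1 : α < 1) :
    (∃ ω ∈ Set.Ioo (0 : ℝ) (π / 2), ∃ τ ∈ Set.Ioo (0 : ℝ) (π / 2),
        Real.arcsin (Real.sin (α * π / 2) * Real.sin τ) + ω < π / 2 ∧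
        τ + ω > π / 2) ∧
    (∀ ω ∈ Set.Ioo (0 : ℝ) (π / 2), ∀ τ ∈ Set.Ioo (0 : ℝ) (π / 2),
        Real.arcsin (Real.sin (α * π / 2) * Real.sin τ) + ω < π / 2 →
        τ + ω > π / 2 →
        Real.cos ω < Real.sin τ ∧ -Real.cos ω / Real.sin τ ∈ Set.Ioo (-1 : ℝ) 1) := by
  have hπ := Real.pi_pos
  set a := α * π / 2 with ha
  have ha0 : 0 < a := by positivity
  have ha2 : a < π / 2 := by rw [ha]; nlinarith
  constructor
  · refine ⟨3 * (π / 2 - a) / 4, ⟨by linarith, by linarith⟩,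
      (a + π / 2) / 2, ⟨by linarith, by linarith⟩, ?_, by linarith⟩
    have hsin : Real.sin a * Real.sin ((a + π / 2) / 2) ≤ Real.sin a := by
      have h1 : 0 < Real.sin a := Real.sin_pos_of_pos_of_lt_pi ha0 (by linarith)
      have h2 : Real.sin ((a + π / 2) / 2) ≤ 1 := Real.sin_le_one _
      nlinarith
    have hmono : Real.arcsin (Real.sin a * Real.sin ((a + π / 2) / 2)) ≤
        Real.arcsin (Real.sin a) := Real.monotone_arcsin hsin
    have heq : Real.arcsin (Real.sin a) = a := Real.arcsin_sin (by linarith) (by linarith)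
    rw [heq] at hmono
    linarith
  · rintro ω ⟨hω0, hω1⟩ τ ⟨hτ0, hτ1⟩ h1 h2
    have hcos : Real.cos ω < Real.sin τ := by
      have := Real.cos_lt_cos_of_nonneg_of_le_pi (by linarith : (0:ℝ) ≤ π / 2 - τ)
        (by linarith : ω ≤ π) (by linarith : π / 2 - τ < ω)
      rwa [Real.cos_pi_div_two_sub] at this
    have hst : 0 < Real.sin τ := Real.sin_pos_of_pos_of_lt_pi hτ0 (by linarith)
    have hcω : 0 < Real.cos ω := Real.cos_pos_of_mem_Ioo ⟨by linarith, hω1⟩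
    refine ⟨hcos, ?_, ?_⟩
    · rw [lt_div_iff₀ hst]; nlinarith
    · rw [div_lt_one hst]; nlinarith
end

section
/- Let ε' ∈ (0, π/2], b ∈ (0,1], τ₀ ∈ ℝ, and suppose ε' ± τ₀ and f⁻¹(ε') ± τ₀ lie in the domain of h(x) = arccos(cos(x)/b), where f⁻¹(x) = arcsin(sin(x)/sin(απ/2)) with 0 < α ≤ 1 and ε' < απ/2. If −h(ε' ± τ₀) ≤ τ ± ω ≤ h(ε' ± τ₀) holds for both signs, then −h(f⁻¹(ε') ± τ₀) ≤ f⁻¹(τ) ± ω ≤ h(f⁻¹(ε') ± τ₀) for both signs, provided |τ| ≤ ε'. -/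
/-!
Write `g x = arcsin (sin x / sin (απ/2))`. Both `g x - x` and `h x - x` are nondecreasing,
and `g` is odd; the reflection `x ↦ π/2 - x` turns `g` into `π/2 - h` (with `b = sin (απ/2)`),
so a single derivative computation, `sin x / √(b² - cos² x) ≥ 1`, covers both. Oddness and
monotonicity of `g x - x` give `|g τ - τ| ≤ g ε' - ε' =: δ`, while monotonicity of `h x - x` gives
`h (g ε' ± τ₀) ≥ h (ε' ± τ₀) + δ`: replacing `τ` by `g τ` moves `τ ± ω` by at most `δ`, and the
bounds widen by at least `δ`.
-/

open Real Set

/-- The domain of `h x = arccos (cos x / b)`. -/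
def hDom (b : ℝ) : Set ℝ := {x ∈ Set.Ioo (0 : ℝ) π | |Real.cos x| ≤ b}

lemma hDom_subset_Icc (b : ℝ) : hDom b ⊆ Icc (arccos b) (π - arccos b) := by
  rintro x ⟨hx, hcos⟩
  rw [abs_le] at hcos
  have hx' : arccos (cos x) = x := arccos_cos hx.1.le hx.2.le
  constructor
  · simpa [hx'] using arccos_le_arccos hcos.2
  · simpa [hx', arccos_neg] using arccos_le_arccos hcos.1

lemma abs_cos_lt_of_mem_Ioo {b x : ℝ} (hx : x ∈ Ioo (arccos b) (π - arccos b)) :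
    |cos x| < b := by
  have hx' : arccos (cos x) = x :=
    arccos_cos (by linarith [hx.1, arccos_nonneg b]) (by linarith [hx.2, arccos_nonneg b])
  rw [abs_lt]
  constructor
  · by_contra! h
    have := arccos_le_arccos h
    rw [hx', arccos_neg] at this
    linarith [hx.2]
  · by_contra! h
    have := arccos_le_arccos h
    rw [hx'] at this
    linarith [hx.1]

lemma mul_sqrt_one_sub_div_sq_le {b : ℝ} (hb0 : 0 < b) (hb1 : b ≤ 1) (c : ℝ) :
    b * √(1 - (c / b) ^ 2) ≤ √(1 - c ^ 2) := by
  calc b * √(1 - (c / b) ^ 2) = √(b ^ 2 - c ^ 2) := by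
        rw [← sqrt_sq hb0.le, ← sqrt_mul (sq_nonneg b), sqrt_sq hb0.le]
        field_simp
    _ ≤ √(1 - c ^ 2) := sqrt_le_sqrt (by nlinarith)

lemma arccos_cos_div_sub_monotoneOn {b : ℝ} (hb0 : 0 < b) (hb1 : b ≤ 1) :
    MonotoneOn (fun x => arccos (cos x / b) - x) (Icc (arccos b) (π - arccos b)) := by
  refine monotoneOn_of_hasDerivWithinAt_nonneg (convex_Icc _ _)
    (f' := fun x => sin x / (b * √(1 - (cos x / b) ^ 2)) - 1) (by fun_prop) ?_ ?_
  · intro x hx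
    rw [interior_Icc] at hx
    have hlt : |cos x / b| < 1 := by
      rw [abs_div, abs_of_pos hb0, div_lt_one hb0]; exact abs_cos_lt_of_mem_Ioo hx
    rw [abs_lt] at hlt
    refine HasDerivAt.hasDerivWithinAt ?_
    refine (((hasDerivAt_arccos hlt.1.ne' hlt.2.ne).comp x
      ((hasDerivAt_cos x).div_const b)).sub (hasDerivAt_id x)).congr_deriv ?_
    ring
  · intro x hx
    rw [interior_Icc] at hx
    have hx0 : 0 < x := by linarith [hx.1, arccos_nonneg b]
    have hxπ : x < π := by linarith [hx.2, arccos_nonneg b]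
    have hlt : (cos x / b) ^ 2 < 1 := by
      rw [sq_lt_one_iff_abs_lt_one, abs_div, abs_of_pos hb0, div_lt_one hb0]
      exact abs_cos_lt_of_mem_Ioo hx
    have hroot : 0 < √(1 - (cos x / b) ^ 2) := sqrt_pos.2 (by linarith)
    rw [sub_nonneg, le_div_iff₀ (by positivity), one_mul,
      sin_eq_sqrt_one_sub_cos_sq hx0.le hxπ.le]
    exact mul_sqrt_one_sub_div_sq_le hb0 hb1 (cos x)

lemma arcsin_sin_div_sub_eq {s : ℝ} (x : ℝ) :
    arcsin (sin x / s) - x = -(arccos (cos (π / 2 - x) / s) - (π / 2 - x)) := by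
  rw [cos_pi_div_two_sub, arcsin_eq_pi_div_two_sub_arccos]
  ring

lemma arcsin_sin_div_sub_monotoneOn {s : ℝ} (hs0 : 0 < s) (hs1 : s ≤ 1) :
    MonotoneOn (fun x => arcsin (sin x / s) - x) (Icc (-arcsin s) (arcsin s)) := by
  intro x hx y hy hxy
  have hmem : ∀ z ∈ Icc (-arcsin s) (arcsin s), π / 2 - z ∈ Icc (arccos s) (π - arccos s) := by
    intro z hz
    rw [arccos_eq_pi_div_two_sub_arcsin]
    constructor <;> linarith [hz.1, hz.2]
  have := arccos_cos_div_sub_monotoneOn hs0 hs1 (hmem y hy) (hmem x hx) (by linarith)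
  simp only [arcsin_sin_div_sub_eq x, arcsin_sin_div_sub_eq y]
  linarith

lemma abs_le_of_monotoneOn_of_map_neg {φ : ℝ → ℝ} {e τ : ℝ} (hφ : MonotoneOn φ (Icc (-e) e))
    (hodd : φ (-e) = -φ e) (hτ : |τ| ≤ e) : |φ τ| ≤ φ e := by
  obtain ⟨hτl, hτr⟩ := abs_le.1 hτ
  have he : τ ∈ Icc (-e) e := ⟨hτl, hτr⟩
  have hle : φ (-e) ≤ φ τ := hφ ⟨le_rfl, by linarith⟩ he hτl
  have hge : φ τ ≤ φ e := hφ he ⟨by linarith, le_rfl⟩ hτr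
  exact abs_le.2 ⟨by linarith, hge⟩

theorem wedge_inclusion_transfer_general (α b ε' τ₀ τ ω : ℝ)
    (hα0 : 0 < α) (hα1 : α ≤ 1) (hb0 : 0 < b) (hb1 : b ≤ 1)
    (hε'α : ε' < α * π / 2)
    (hdp : ε' + τ₀ ∈ hDom b) (hdm : ε' - τ₀ ∈ hDom b)
    (hdp' : Real.arcsin (Real.sin ε' / Real.sin (α * π / 2)) + τ₀ ∈ hDom b)
    (hdm' : Real.arcsin (Real.sin ε' / Real.sin (α * π / 2)) - τ₀ ∈ hDom b)
    (hτ : |τ| ≤ ε')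
    (h1 : -Real.arccos (Real.cos (ε' + τ₀) / b) ≤ τ + ω)
    (h2 : τ + ω ≤ Real.arccos (Real.cos (ε' + τ₀) / b))
    (h3 : -Real.arccos (Real.cos (ε' - τ₀) / b) ≤ τ - ω)
    (h4 : τ - ω ≤ Real.arccos (Real.cos (ε' - τ₀) / b)) :
    (-Real.arccos (Real.cos (Real.arcsin (Real.sin ε' / Real.sin (α * π / 2)) + τ₀) / b)
        ≤ Real.arcsin (Real.sin τ / Real.sin (α * π / 2)) + ω ∧
      Real.arcsin (Real.sin τ / Real.sin (α * π / 2)) + ω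
        ≤ Real.arccos (Real.cos (Real.arcsin (Real.sin ε' / Real.sin (α * π / 2)) + τ₀) / b)) ∧
    (-Real.arccos (Real.cos (Real.arcsin (Real.sin ε' / Real.sin (α * π / 2)) - τ₀) / b)
        ≤ Real.arcsin (Real.sin τ / Real.sin (α * π / 2)) - ω ∧
      Real.arcsin (Real.sin τ / Real.sin (α * π / 2)) - ω
        ≤ Real.arccos (Real.cos (Real.arcsin (Real.sin ε' / Real.sin (α * π / 2)) - τ₀) / b)) := by
  set a := α * π / 2 with ha
  have ha0 : 0 < a := by positivity
  have ha2 : a ≤ π / 2 := by rw [ha]; nlinarith [pi_pos]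
  have hsa : arcsin (sin a) = a := arcsin_sin (by linarith) ha2
  have hgap : |arcsin (sin τ / sin a) - τ| ≤ arcsin (sin ε' / sin a) - ε' := by
    have hε'0 : 0 ≤ ε' := (abs_nonneg τ).trans hτ
    refine abs_le_of_monotoneOn_of_map_neg
      ((arcsin_sin_div_sub_monotoneOn (sin_pos_of_pos_of_lt_pi ha0 (by linarith [pi_pos]))
        (sin_le_one a)).mono ?_) ?_ hτ
    · rw [hsa]
      exact Icc_subset_Icc (by linarith) hε'α.le
    · simp only [sin_neg, neg_div, arcsin_neg]
      ring
  have hε'E : ε' ≤ arcsin (sin ε' / sin a) := by linarith [(abs_nonneg _).trans hgap]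
  have hh := arccos_cos_div_sub_monotoneOn hb0 hb1
  have hp := hh (hDom_subset_Icc b hdp) (hDom_subset_Icc b hdp') (by linarith)
  have hm := hh (hDom_subset_Icc b hdm) (hDom_subset_Icc b hdm') (by linarith)
  simp only at hp hm
  rw [abs_le] at hgap
  exact ⟨⟨by linarith, by linarith⟩, ⟨by linarith, by linarith⟩⟩

/-- Let `g = f⁻¹` with `g x = arcsin (sin x / sin (α*π/2))` and
`h x = arccos (cos x / b)`, where `0 < α ≤ 1`, `0 < b ≤ 1`. Let `ε' ∈ (0, π/2]` with
`ε' < α π/2`, and suppose `ε' ± τ₀` and `g ε' ± τ₀` lie in the domain of `h`.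
If `-h (ε' ± τ₀) ≤ τ ± ω ≤ h (ε' ± τ₀)` for both signs and `|τ| ≤ ε'`, then
`-h (g ε' ± τ₀) ≤ g τ ± ω ≤ h (g ε' ± τ₀)` for both signs. -/
theorem wedge_inclusion_transfer (α b ε' τ₀ τ ω : ℝ)
    (hα0 : 0 < α) (hα1 : α ≤ 1) (hb0 : 0 < b) (hb1 : b ≤ 1)
    (hε'0 : 0 < ε') (hε'2 : ε' ≤ π / 2) (hε'α : ε' < α * π / 2)
    (hdp : ε' + τ₀ ∈ hDom b) (hdm : ε' - τ₀ ∈ hDom b)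
    (hdp' : Real.arcsin (Real.sin ε' / Real.sin (α * π / 2)) + τ₀ ∈ hDom b)
    (hdm' : Real.arcsin (Real.sin ε' / Real.sin (α * π / 2)) - τ₀ ∈ hDom b)
    (hτ : |τ| ≤ ε')
    (h1 : -Real.arccos (Real.cos (ε' + τ₀) / b) ≤ τ + ω)
    (h2 : τ + ω ≤ Real.arccos (Real.cos (ε' + τ₀) / b))
    (h3 : -Real.arccos (Real.cos (ε' - τ₀) / b) ≤ τ - ω)
    (h4 : τ - ω ≤ Real.arccos (Real.cos (ε' - τ₀) / b)) :
    (-Real.arccos (Real.cos (Real.arcsin (Real.sin ε' / Real.sin (α * π / 2)) + τ₀) / b)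
        ≤ Real.arcsin (Real.sin τ / Real.sin (α * π / 2)) + ω ∧
      Real.arcsin (Real.sin τ / Real.sin (α * π / 2)) + ω
        ≤ Real.arccos (Real.cos (Real.arcsin (Real.sin ε' / Real.sin (α * π / 2)) + τ₀) / b)) ∧
    (-Real.arccos (Real.cos (Real.arcsin (Real.sin ε' / Real.sin (α * π / 2)) - τ₀) / b)
        ≤ Real.arcsin (Real.sin τ / Real.sin (α * π / 2)) - ω ∧
      Real.arcsin (Real.sin τ / Real.sin (α * π / 2)) - ω
        ≤ Real.arccos (Real.cos (Real.arcsin (Real.sin ε' / Real.sin (α * π / 2)) - τ₀) / b)) :=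
  wedge_inclusion_transfer_general α b ε' τ₀ τ ω hα0 hα1 hb0 hb1 hε'α hdp hdm hdp' hdm' hτ h1 h2 h3
    h4
end
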